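/- arXiv:cs/0310021 — 3 statements merged into one kernel-verified Lean document; each statement's English description precedes it below -/
import Mathlib

section
/- For crisp relations Q ⊆ A×B, R ⊆ B×C, S ⊆ C×D, the pseudo-associativity Q ◁ (R ▷ S) = (Q ◁ R) ▷ S holds, where (R ◁ S) = {(x,z) | ∀y, xRy → ySz} and (R ▷ S) = {(x,z) | ∀y, ySz → xRy}. -/
def BKsub {α β γ : Type*} (R : α → β → Prop) (S : β → γ → Prop) : α → γ → Prop :=
  fun x z => ∀ y, R x y → S y z

def BKsup {α β γ : Type*} (R : α → β → Prop) (S : β → γ → Prop) : α → γ → Prop :=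
  fun x z => ∀ y, S y z → R x y

theorem pseudo_assoc_sub_sup {A B C D : Type*} (Q : A → B → Prop) (R : B → C → Prop)
    (S : C → D → Prop) : BKsub Q (BKsup R S) = BKsup (BKsub Q R) S :=
  funext₂ fun _ _ => propext
    ⟨fun h c hc b hb => h b hb c hc, fun h b hb c hc => h c hc b hb⟩
end

section
/- A crisp relation R on a set X is a preorder (reflexive and transitive) if and only if R = R ▷ R⁻¹, where R⁻¹ is the converse relation. -/
/-! For any relation `R`, `x (R ▷ R⁻¹) z` says that every `R`-successor of `z` is an `R`-successor
of `x`, so `R ▷ R⁻¹` is always a preorder. Conversely, if `R` is a preorder then `x R z` gives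
this inclusion by transitivity, and the inclusion gives `x R z` by applying it to `z R z`. -/

section BKsupConverse

variable {α β : Type*}

theorem reflexive_bksup_converse (R : α → β → Prop) :
    Reflexive (BKsup R fun b a => R a b) :=
  fun _ _ hy => hy

theorem transitive_bksup_converse (R : α → β → Prop) :
    Transitive (BKsup R fun b a => R a b) :=
  fun _ _ _ hxy hyz w hzw => hxy w (hyz w hzw)

theorem bksup_converse_eq_self {R : α → α → Prop} (hr : Reflexive R) (ht : Transitive R) :
    BKsup R (fun y x => R x y) = R := by
  funext x z
  exact propext ⟨fun h => h z (hr z), fun hxz _ hzy => ht hxz hzy⟩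

end BKsupConverse

theorem preorder_iff_sup_converse {X : Type*} (R : X → X → Prop) :
    (Reflexive R ∧ Transitive R) ↔ R = BKsup R (fun x y => R y x) := by
  constructor
  · rintro ⟨hr, ht⟩
    exact (bksup_converse_eq_self hr ht).symm
  · intro h
    rw [h]
    exact ⟨reflexive_bksup_converse R, transitive_bksup_converse R⟩
end

section
/- A crisp relation R on a set X is an equivalence relation if and only if R = R □ R⁻¹, where the square product is defined by x(R□S)z ↔ ∀y, (xRy ↔ ySz). -/
/-!
`R □ R⁻¹` relates `x` and `z` exactly when they have the same `R`-successors, i.e. it is the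
kernel of `x ↦ R x`. So `R = R □ R⁻¹` says that `R` is the kernel of a map, and the kernels of
maps are exactly the equivalence relations: an equivalence relation is the kernel of the map
sending a point to its class.
-/

def BKsq {α β γ : Type*} (R : α → β → Prop) (S : β → γ → Prop) : α → γ → Prop :=
  fun x z => ∀ y, R x y ↔ S y z

open Function

theorem BKsq_converse_eq_onFun {α β : Type*} (R : α → β → Prop) :
    BKsq R (fun x y => R y x) = (Eq on R) := by
  ext x z
  simp only [BKsq, onFun, funext_iff, eq_iff_iff]

theorem equivalence_iff_eq_onFun_eq {α : Type*} {R : α → α → Prop} :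
    Equivalence R ↔ R = (Eq on R) := by
  refine ⟨fun h => ?_, fun h => h ▸ eq_equivalence.comap R⟩
  ext x z
  refine ⟨fun hxz => funext fun y => propext ⟨h.trans (h.symm hxz), h.trans hxz⟩, fun hR => ?_⟩
  exact (congrFun hR z).mpr (h.refl z)

theorem equivalence_iff_sq_converse {X : Type*} (R : X → X → Prop) :
    Equivalence R ↔ R = BKsq R (fun x y => R y x) := by
  rw [BKsq_converse_eq_onFun]
  exact equivalence_iff_eq_onFun_eq
end
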